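/- arXiv:1905.02603 — 2 statements merged into one kernel-verified Lean document; each statement's English description precedes it below -/
import Mathlib

section
/- Let G be a finite connected weighted graph with more than one vertex, L its Laplacian with first nonzero eigenvalue λ₁, and Ψ(f) = ⟨f, ψ⟩ a linear functional given by ψ ∈ ℓ²(G) with Ψ(χ_G) ≠ 0, where χ_G is the all-ones function. Then for every f with Ψ(f) = 0 one has ‖f‖² ≤ (θ/λ₁) ‖∇f‖², where θ = |G| ‖ψ‖² / |Ψ(χ_G)|² and |G| is the number of vertices. -/
/-!
Split `f = g + a • 𝟙` with `g ⊥ 𝟙`. Since `⟪ψ, f⟫ = 0`, Cauchy–Schwarz for `ψ` against the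
component of `𝟙` orthogonal to `f` gives the Gram-determinant bound
`|Ψ(𝟙)|² ‖f‖² ≤ ‖ψ‖² |G| ‖g‖²`. The Laplacian is symmetric with `⟪f, L f⟫ = ‖∇f‖²`, and by
connectivity its kernel is the constants; expanding `g ⊥ 𝟙` in an orthonormal eigenbasis of `L`
therefore gives `λ₁ ‖g‖² ≤ ‖∇g‖² = ‖∇f‖²`.
-/

open Finset

noncomputable def lap {V : Type*} [Fintype V] (w : V → V → ℝ) (f : V → ℂ) : V → ℂ :=
  fun v => ∑ u, (f v - f u) * (w v u : ℂ)

noncomputable def gip {V : Type*} [Fintype V] (f g : V → ℂ) : ℂ :=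
  ∑ v, f v * (starRingEnd ℂ) (g v)

noncomputable def gradSq {V : Type*} [Fintype V] (w : V → V → ℝ) (f : V → ℂ) : ℝ :=
  (1 / 2) * ∑ u, ∑ v, ‖f u - f v‖ ^ 2 * w u v

noncomputable def normSq {V : Type*} [Fintype V] (f : V → ℂ) : ℝ := ∑ v, ‖f v‖ ^ 2

/-- `μ` is an eigenvalue of the weighted graph Laplacian. -/
def IsEigen {V : Type*} [Fintype V] (w : V → V → ℝ) (μ : ℝ) : Prop :=
  ∃ g : V → ℂ, g ≠ 0 ∧ lap w g = fun v => (μ : ℂ) * g v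

open scoped InnerProductSpace ComplexConjugate

section InnerProduct
variable {𝕜 E : Type*} [RCLike 𝕜] [NormedAddCommGroup E] [InnerProductSpace 𝕜 E]

theorem norm_sq_mul_norm_sub_starProjection_singleton_sq (e x : E) :
    ‖e‖ ^ 2 * ‖x - (𝕜 ∙ e).starProjection x‖ ^ 2 = ‖e‖ ^ 2 * ‖x‖ ^ 2 - ‖⟪e, x⟫_𝕜‖ ^ 2 := by
  rcases eq_or_ne e 0 with rfl | he
  · simp
  have hre : RCLike.re ⟪x, (𝕜 ∙ e).starProjection x⟫_𝕜 = ‖⟪e, x⟫_𝕜‖ ^ 2 / ‖e‖ ^ 2 := by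
    rw [Submodule.starProjection_singleton, inner_smul_right, ← inner_conj_symm x,
      div_mul_eq_mul_div, RCLike.mul_conj]
    norm_cast
  rw [@norm_sub_sq 𝕜, hre, Submodule.starProjection_singleton, norm_smul, norm_div,
    RCLike.norm_ofReal, abs_of_nonneg (by positivity)]
  field_simp
  ring

theorem norm_inner_sq_mul_norm_sq_le_of_inner_eq_zero {e x y : E} (hyx : ⟪y, x⟫_𝕜 = 0) :
    ‖⟪y, e⟫_𝕜‖ ^ 2 * ‖x‖ ^ 2 ≤ ‖y‖ ^ 2 * (‖e‖ ^ 2 * ‖x - (𝕜 ∙ e).starProjection x‖ ^ 2) := by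
  -- Cauchy–Schwarz for `y` against the component of `e` orthogonal to `x`
  have hye : ⟪y, e⟫_𝕜 = ⟪y, e - (𝕜 ∙ x).starProjection e⟫_𝕜 := by
    rw [inner_sub_right, Submodule.starProjection_singleton, inner_smul_right, hyx, mul_zero,
      sub_zero]
  have hcs : ‖⟪y, e⟫_𝕜‖ ^ 2 ≤ ‖y‖ ^ 2 * ‖e - (𝕜 ∙ x).starProjection e‖ ^ 2 := by
    rw [hye, ← mul_pow]
    exact pow_le_pow_left₀ (norm_nonneg _) (norm_inner_le_norm _ _) 2
  calc ‖⟪y, e⟫_𝕜‖ ^ 2 * ‖x‖ ^ 2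
      ≤ ‖y‖ ^ 2 * (‖x‖ ^ 2 * ‖e - (𝕜 ∙ x).starProjection e‖ ^ 2) := by
        nlinarith [sq_nonneg ‖x‖]
    _ = ‖y‖ ^ 2 * (‖e‖ ^ 2 * ‖x - (𝕜 ∙ e).starProjection x‖ ^ 2) := by
        rw [norm_sq_mul_norm_sub_starProjection_singleton_sq,
          norm_sq_mul_norm_sub_starProjection_singleton_sq, ← inner_conj_symm, RCLike.norm_conj]
        ring

theorem LinearMap.IsSymmetric.mul_norm_sq_le_re_inner_map_self [FiniteDimensional 𝕜 E]
    {T : E →ₗ[𝕜] E} (hT : T.IsSymmetric) {x : E} {c : ℝ}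
    (h : ∀ (μ : ℝ) (v : E), Module.End.HasEigenvector T μ v → ⟪v, x⟫_𝕜 ≠ 0 → c ≤ μ) :
    c * ‖x‖ ^ 2 ≤ RCLike.re ⟪x, T x⟫_𝕜 := by
  set b := hT.eigenvectorBasis rfl
  set μ := hT.eigenvalues rfl
  have hTx : ⟪x, T x⟫_𝕜 = ∑ i, ((μ i * ‖⟪b i, x⟫_𝕜‖ ^ 2 : ℝ) : 𝕜) := by
    rw [← b.sum_inner_mul_inner x (T x)]
    refine Finset.sum_congr rfl fun i _ => ?_
    rw [← hT, hT.apply_eigenvectorBasis, inner_smul_left, RCLike.conj_ofReal, ← inner_conj_symm x,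
      mul_left_comm, RCLike.conj_mul]
    push_cast
    rfl
  rw [hTx, map_sum, ← b.sum_sq_norm_inner_right, Finset.mul_sum]
  refine Finset.sum_le_sum fun i _ => ?_
  rw [RCLike.ofReal_re]
  by_cases hi : ⟪b i, x⟫_𝕜 = 0
  · simp [hi]
  · exact mul_le_mul_of_nonneg_right (h _ _ (hT.hasEigenvector_eigenvectorBasis rfl i) hi)
      (sq_nonneg _)

end InnerProduct

section Graph
variable {V : Type*} [Fintype V] {w : V → V → ℝ}

theorem gip_eq_inner (f g : V → ℂ) : gip f g = ⟪WithLp.toLp 2 g, WithLp.toLp 2 f⟫_ℂ := rfl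

theorem normSq_eq_norm_sq (f : V → ℂ) : normSq f = ‖WithLp.toLp 2 f‖ ^ 2 :=
  (EuclideanSpace.norm_sq_eq _).symm

theorem gip_lap_green (hsym : ∀ u v, w u v = w v u) (f g : V → ℂ) :
    gip (lap w f) g = (1 / 2 : ℂ) * ∑ u, ∑ v, (f u - f v) * conj (g u - g v) * w u v := by
  have h₁ : gip (lap w f) g = ∑ u, ∑ v, (f u - f v) * conj (g u) * w u v := by
    simp only [gip, lap, sum_mul]
    exact sum_congr rfl fun u _ => sum_congr rfl fun v _ => by ring
  have h₂ : gip (lap w f) g = ∑ u, ∑ v, -((f u - f v) * conj (g v) * w u v) := by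
    rw [h₁, sum_comm]
    exact sum_congr rfl fun u _ => sum_congr rfl fun v _ => by rw [hsym]; ring
  have hsplit : ∑ u, ∑ v, (f u - f v) * conj (g u - g v) * w u v =
      ∑ u, ∑ v, (f u - f v) * conj (g u) * w u v +
        ∑ u, ∑ v, -((f u - f v) * conj (g v) * w u v) := by
    rw [← sum_add_distrib]
    refine sum_congr rfl fun u _ => ?_
    rw [← sum_add_distrib]
    exact sum_congr rfl fun v _ => by rw [map_sub]; ring
  rw [hsplit]
  linear_combination (1 / 2 : ℂ) * h₁ + (1 / 2 : ℂ) * h₂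

theorem gip_lap_self (hsym : ∀ u v, w u v = w v u) (f : V → ℂ) :
    gip (lap w f) f = gradSq w f := by
  rw [gip_lap_green hsym, gradSq]
  push_cast
  congr 1
  exact sum_congr rfl fun u _ => sum_congr rfl fun v _ => by rw [Complex.mul_conj']

theorem gip_lap_eq_conj_gip_lap (hsym : ∀ u v, w u v = w v u) (f g : V → ℂ) :
    gip (lap w f) g = conj (gip (lap w g) f) := by
  simp only [gip_lap_green hsym, map_mul, map_sum, map_sub, map_div₀, map_one, map_ofNat,
    Complex.conj_conj, Complex.conj_ofReal]
  congr 1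
  exact sum_congr rfl fun u _ => sum_congr rfl fun v _ => by ring

theorem gradSq_nonneg (hnn : ∀ u v, 0 ≤ w u v) (f : V → ℂ) : 0 ≤ gradSq w f :=
  mul_nonneg (by norm_num) <| sum_nonneg fun u _ => sum_nonneg fun v _ =>
    mul_nonneg (by positivity) (hnn u v)

theorem gradSq_sub_const (f : V → ℂ) (a : ℂ) : gradSq w (fun v => f v - a) = gradSq w f := by
  simp only [gradSq, sub_sub_sub_cancel_right]

theorem eq_of_gradSq_eq_zero (hnn : ∀ u v, 0 ≤ w u v)
    (hconn : (SimpleGraph.fromRel fun u v : V => w u v ≠ 0).Connected)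
    {f : V → ℂ} (hf : gradSq w f = 0) (u v : V) : f u = f v := by
  have hterm : ∀ u v, ‖f u - f v‖ ^ 2 * w u v = 0 := by
    have hsum : ∑ u, ∑ v, ‖f u - f v‖ ^ 2 * w u v = 0 := by
      simpa [gradSq] using hf
    have hnn' : ∀ u v, 0 ≤ ‖f u - f v‖ ^ 2 * w u v := fun u v =>
      mul_nonneg (by positivity) (hnn u v)
    intro u v
    rw [sum_eq_zero_iff_of_nonneg fun u _ => sum_nonneg fun v _ => hnn' u v] at hsum
    exact (sum_eq_zero_iff_of_nonneg fun v _ => hnn' u v).mp (hsum u (mem_univ u)) v (mem_univ v)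
  have hedge : ∀ u v, w u v ≠ 0 → f u = f v := fun u v huv => by
    simpa [huv, sub_eq_zero] using hterm u v
  obtain ⟨p⟩ := hconn.preconnected u v
  induction p with
  | nil => rfl
  | cons hadj _ ih =>
    rw [SimpleGraph.fromRel_adj] at hadj
    rcases hadj.2 with h | h
    · exact (hedge _ _ h).trans ih
    · exact (hedge _ _ h).symm.trans ih

variable (w) in
noncomputable def lapOp : EuclideanSpace ℂ V →ₗ[ℂ] EuclideanSpace ℂ V where
  toFun x := WithLp.toLp 2 (lap w x.ofLp)
  map_add' x y := by
    ext v
    simp only [lap, PiLp.add_apply, ← sum_add_distrib]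
    exact sum_congr rfl fun u _ => by ring
  map_smul' c x := by
    ext v
    simp only [lap, PiLp.smul_apply, smul_eq_mul, RingHom.id_apply, mul_sum]
    exact sum_congr rfl fun u _ => by ring

theorem lapOp_isSymmetric (hsym : ∀ u v, w u v = w v u) : (lapOp w).IsSymmetric := fun x y => by
  rw [← inner_conj_symm]
  exact (gip_lap_eq_conj_gip_lap hsym y.ofLp x.ofLp).symm

theorem inner_lapOp_self (hsym : ∀ u v, w u v = w v u) (f : V → ℂ) :
    ⟪WithLp.toLp 2 f, lapOp w (WithLp.toLp 2 f)⟫_ℂ = gradSq w f :=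
  gip_lap_self hsym f

theorem isEigen_of_hasEigenvector {μ : ℝ} {x : EuclideanSpace ℂ V}
    (hx : Module.End.HasEigenvector (lapOp w) (μ : ℂ) x) : IsEigen w μ := by
  refine ⟨x.ofLp, fun h => hx.2 (by simpa using congrArg (WithLp.toLp 2) h), ?_⟩
  funext v
  simpa [lapOp] using congrArg (fun y : EuclideanSpace ℂ V => y v) hx.apply_eq_smul

theorem IsEigen.nonneg (hsym : ∀ u v, w u v = w v u) (hnn : ∀ u v, 0 ≤ w u v) {μ : ℝ}
    (hμ : IsEigen w μ) : 0 ≤ μ := by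
  obtain ⟨g, hg, hlap⟩ := hμ
  have hquot : μ * normSq g = gradSq w g := by
    have h := gip_lap_self hsym g
    rw [hlap, gip] at h
    simp only [mul_assoc, ← mul_sum, Complex.mul_conj'] at h
    exact_mod_cast h
  have hpos : 0 < normSq g := by
    rw [normSq_eq_norm_sq]
    exact pow_pos (norm_pos_iff.mpr fun h => hg (by simpa using congrArg WithLp.ofLp h)) 2
  exact nonneg_of_mul_nonneg_left (hquot ▸ gradSq_nonneg hnn g) hpos

theorem mul_normSq_le_gradSq (hsym : ∀ u v, w u v = w v u) (hnn : ∀ u v, 0 ≤ w u v)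
    (hconn : (SimpleGraph.fromRel fun u v : V => w u v ≠ 0).Connected) {c : ℝ}
    (hc : c ∈ lowerBounds {μ : ℝ | μ ≠ 0 ∧ IsEigen w μ}) {g : V → ℂ} (hg : ∑ v, g v = 0) :
    c * normSq g ≤ gradSq w g := by
  have h := (lapOp_isSymmetric hsym).mul_norm_sq_le_re_inner_map_self
    (x := WithLp.toLp 2 g) (c := c) fun μ x hx hxg => by
      refine hc ⟨fun hμ => hxg ?_, isEigen_of_hasEigenvector hx⟩
      -- a `0`-eigenvector has zero energy, hence is constant and orthogonal to `g`
      have hgrad : gradSq w x.ofLp = 0 := by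
        have h₀ := inner_lapOp_self hsym x.ofLp
        rw [hx.apply_eq_smul, hμ, RCLike.ofReal_zero, zero_smul, inner_zero_right] at h₀
        exact_mod_cast h₀.symm
      obtain ⟨v₀⟩ := hconn.nonempty
      rw [← gip_eq_inner, gip]
      simp_rw [eq_of_gradSq_eq_zero hnn hconn hgrad _ v₀, ← sum_mul, hg, zero_mul]
  rw [inner_lapOp_self hsym, ← normSq_eq_norm_sq] at h
  exact h

variable (V) in
noncomputable def ones : EuclideanSpace ℂ V := WithLp.toLp 2 fun _ => 1

theorem norm_ones_sq : ‖ones V‖ ^ 2 = Fintype.card V := by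
  simp [ones, EuclideanSpace.norm_sq_eq]

theorem mul_norm_sub_starProjection_ones_sq_le_gradSq (hsym : ∀ u v, w u v = w v u)
    (hnn : ∀ u v, 0 ≤ w u v) (hconn : (SimpleGraph.fromRel fun u v : V => w u v ≠ 0).Connected)
    {c : ℝ} (hc : c ∈ lowerBounds {μ : ℝ | μ ≠ 0 ∧ IsEigen w μ}) (f : V → ℂ) :
    c * ‖WithLp.toLp 2 f - (ℂ ∙ ones V).starProjection (WithLp.toLp 2 f)‖ ^ 2 ≤ gradSq w f := by
  set g := WithLp.toLp 2 f - (ℂ ∙ ones V).starProjection (WithLp.toLp 2 f)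
  have hsum : ∑ v, g v = 0 := by
    have h := Submodule.mem_orthogonal_singleton_iff_inner_right.mp
      (Submodule.sub_starProjection_mem_orthogonal (K := ℂ ∙ ones V) (WithLp.toLp 2 f))
    simpa [gip, ones] using (gip_eq_inner g.ofLp (ones V).ofLp).trans h
  obtain ⟨a, ha⟩ : ∃ a : ℂ, g.ofLp = fun v => f v - a :=
    ⟨⟪ones V, WithLp.toLp 2 f⟫_ℂ / ((‖ones V‖ ^ 2 : ℝ) : ℂ), by
      ext v; simp [g, ones, Submodule.starProjection_singleton]⟩
  have h := mul_normSq_le_gradSq hsym hnn hconn hc hsum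
  rwa [ha, gradSq_sub_const, ← ha, normSq_eq_norm_sq] at h

end Graph

theorem poincare_kernel_functional_general
    {V : Type*} [Fintype V] (w : V → V → ℝ)
    (hsym : ∀ u v, w u v = w v u) (hnn : ∀ u v, 0 ≤ w u v)
    (hconn : (SimpleGraph.fromRel fun u v : V => w u v ≠ 0).Connected)
    (lam1 : ℝ) (hlam : IsLeast {μ : ℝ | μ ≠ 0 ∧ IsEigen w μ} lam1)
    (ψ : V → ℂ) (hψ : gip (fun _ => 1) ψ ≠ 0)
    (f : V → ℂ) (hf : gip f ψ = 0) :
    normSq f ≤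
      ((Fintype.card V : ℝ) * normSq ψ / ‖gip (fun _ => (1 : ℂ)) ψ‖ ^ 2) / lam1
        * gradSq w f := by
  set F := WithLp.toLp 2 f
  set d := ‖F - (ℂ ∙ ones V).starProjection F‖ ^ 2
  have hkernel : ‖gip (fun _ => 1) ψ‖ ^ 2 * normSq f ≤ normSq ψ * (Fintype.card V * d) := by
    have h := norm_inner_sq_mul_norm_sq_le_of_inner_eq_zero (e := ones V) hf
    rwa [norm_ones_sq, ← normSq_eq_norm_sq, ← normSq_eq_norm_sq] at h
  have hgap : lam1 * d ≤ gradSq w f :=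
    mul_norm_sub_starProjection_ones_sq_le_gradSq hsym hnn hconn hlam.2 f
  have hlam1 : 0 < lam1 := (hlam.1.2.nonneg hsym hnn).lt_of_ne' hlam.1.1
  have hs : 0 < ‖gip (fun _ => 1) ψ‖ ^ 2 := pow_pos (norm_pos_iff.mpr hψ) 2
  have hψ0 : 0 ≤ (Fintype.card V : ℝ) * normSq ψ := by
    rw [normSq_eq_norm_sq]; positivity
  rw [div_div, div_mul_eq_mul_div, le_div_iff₀ (by positivity)]
  nlinarith [mul_le_mul_of_nonneg_left hgap hψ0]

theorem poincare_kernel_functional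
    {V : Type*} [Fintype V] (w : V → V → ℝ)
    (hsym : ∀ u v, w u v = w v u) (hnn : ∀ u v, 0 ≤ w u v)
    (hdiag : ∀ v, w v v = 0)
    (hconn : (SimpleGraph.fromRel fun u v : V => w u v ≠ 0).Connected)
    (hcard : 1 < Fintype.card V)
    (lam1 : ℝ) (hlam : IsLeast {μ : ℝ | μ ≠ 0 ∧ IsEigen w μ} lam1)
    (ψ : V → ℂ) (hψ : gip (fun _ => 1) ψ ≠ 0)
    (f : V → ℂ) (hf : gip f ψ = 0) :
    normSq f ≤
      ((Fintype.card V : ℝ) * normSq ψ / ‖gip (fun _ => (1 : ℂ)) ψ‖ ^ 2) / lam1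
        * gradSq w f :=
  poincare_kernel_functional_general w hsym hnn hconn lam1 hlam ψ hψ f hf
end

section
/- Let L be a positive semidefinite self-adjoint operator on a finite-dimensional Hilbert space and ω > 0. A vector f lies in the span of eigenvectors of L with eigenvalues ≤ ω if and only if ‖L^s f‖ ≤ ω^s ‖f‖ for all positive reals s (equivalently, for all positive integers s). -/
local notation "⟪" x ", " y "⟫" => @inner ℂ _ _ x y

theorem paley_wiener_iff_bernstein
    {n : ℕ} (T : EuclideanSpace ℂ (Fin n) →ₗ[ℂ] EuclideanSpace ℂ (Fin n))
    (hsa : ∀ x y, ⟪T x, y⟫ = ⟪x, T y⟫)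
    (hpos : ∀ x, 0 ≤ (⟪T x, x⟫).re)
    (ω : ℝ) (hω : 0 < ω) (f : EuclideanSpace ℂ (Fin n)) :
    f ∈ Submodule.span ℂ
        {g : EuclideanSpace ℂ (Fin n) | g ≠ 0 ∧ ∃ μ : ℝ, μ ≤ ω ∧ T g = (μ : ℂ) • g} ↔
      ∀ s : ℕ, 0 < s → ‖(T ^ s) f‖ ≤ ω ^ s * ‖f‖ := by
  have hT : T.IsSymmetric := hsa
  have hn : Module.finrank ℂ (EuclideanSpace ℂ (Fin n)) = n := finrank_euclideanSpace_fin
  set b := hT.eigenvectorBasis hn with hbdef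
  set μ := hT.eigenvalues hn with hμdef
  have hTb : ∀ i, T (b i) = (μ i : ℂ) • b i := fun i => hT.apply_eigenvectorBasis hn i
  have hbne : ∀ i, b i ≠ 0 := fun i => by
    intro h0
    have := b.orthonormal.1 i
    rw [h0] at this; simp at this
  have hμpos : ∀ i, 0 ≤ μ i := by
    intro i
    have h1 : ⟪T (b i), b i⟫ = (μ i : ℂ) := by
      rw [hTb i, inner_smul_left, inner_self_eq_norm_sq_to_K, b.orthonormal.1 i]
      simp
    have := hpos (b i)
    rw [h1] at this
    simpa using this
  have hTpow : ∀ (s : ℕ) i, (T ^ s) (b i) = ((μ i : ℂ) ^ s) • b i := by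
    intro s i
    induction s with
    | zero => simp
    | succ k ih =>
      rw [pow_succ, Module.End.mul_apply, hTb i, map_smul, ih, smul_smul, pow_succ]
      ring_nf
  have hc : ∀ (s : ℕ) i, b.repr ((T ^ s) f) i = (μ i : ℂ) ^ s * b.repr f i := by
    intro s i
    rw [OrthonormalBasis.repr_apply_apply, OrthonormalBasis.repr_apply_apply,
      ← (hT.pow s) (b i) f, hTpow, inner_smul_left]
    congr 1
    rw [← Complex.ofReal_pow, Complex.conj_ofReal]
  have hnormsq : ∀ x : EuclideanSpace ℂ (Fin n), ‖x‖ ^ 2 = ∑ i, ‖b.repr x i‖ ^ 2 := by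
    intro x
    rw [← b.repr.norm_map x, EuclideanSpace.norm_eq, Real.sq_sqrt (by positivity)]
  have hterm : ∀ (s : ℕ) i, ‖b.repr ((T ^ s) f) i‖ = μ i ^ s * ‖b.repr f i‖ := by
    intro s i
    rw [hc s i, norm_mul, norm_pow, Complex.norm_real, Real.norm_eq_abs,
      abs_of_nonneg (hμpos i)]
  constructor
  · -- span membership → Bernstein inequality
    intro hf s hs
    -- coefficients above ω vanish
    have hcoeff : ∀ i, ω < μ i → ⟪b i, f⟫ = 0 := by
      clear hc hterm hnormsq
      intro i hi
      induction hf using Submodule.span_induction with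
      | mem g hg =>
        obtain ⟨hg0, μ', hμ'ω, hTg⟩ := hg
        have h1 : ⟪b i, T g⟫ = (μ' : ℂ) * ⟪b i, g⟫ := by rw [hTg, inner_smul_right]
        have h2 : ⟪b i, T g⟫ = (μ i : ℂ) * ⟪b i, g⟫ := by
          rw [← hsa, hTb, inner_smul_left, Complex.conj_ofReal]
        have h3 : ((μ i : ℂ) - (μ' : ℂ)) * ⟪b i, g⟫ = 0 := by
          rw [sub_mul, ← h2, ← h1, sub_self]
        rcases mul_eq_zero.mp h3 with h | h
        · exfalso
          have : (μ i : ℂ) = (μ' : ℂ) := sub_eq_zero.mp h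
          have : μ i = μ' := by exact_mod_cast this
          linarith
        · exact h
      | zero => exact inner_zero_right _
      | add x y hx hy ihx ihy => rw [inner_add_right, ihx, ihy, add_zero]
      | smul a x hx ihx => rw [inner_smul_right, ihx, mul_zero]
    have hcoeff' : ∀ i, ω < μ i → b.repr f i = 0 := by
      intro i hi
      rw [OrthonormalBasis.repr_apply_apply]
      exact hcoeff i hi
    have key : ‖(T ^ s) f‖ ^ 2 ≤ (ω ^ s * ‖f‖) ^ 2 := by
      rw [hnormsq, mul_pow, hnormsq f, Finset.mul_sum]
      apply Finset.sum_le_sum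
      intro i _
      rcases le_or_gt (μ i) ω with h | h
      · rw [hterm s i, mul_pow]
        have hμω : μ i ^ s ≤ ω ^ s := pow_le_pow_left₀ (hμpos i) h s
        have h0 : (0 : ℝ) ≤ μ i ^ s := pow_nonneg (hμpos i) s
        have hsq : (μ i ^ s) ^ 2 ≤ (ω ^ s) ^ 2 := by nlinarith
        exact mul_le_mul_of_nonneg_right hsq (by positivity)
      · rw [hterm s i, hcoeff' i h]
        simp
    have := Real.sqrt_le_sqrt key
    rwa [Real.sqrt_sq (norm_nonneg _), Real.sqrt_sq (by positivity)] at this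
  · -- Bernstein inequality → span membership
    intro hbd
    have hcoeff : ∀ i, ω < μ i → b.repr f i = 0 := by
      intro i hi
      by_contra hc0
      have hnc : 0 < ‖b.repr f i‖ := norm_pos_iff.mpr hc0
      have hlt : (1 : ℝ) < μ i / ω := (one_lt_div hω).mpr hi
      obtain ⟨s, hs⟩ := pow_unbounded_of_one_lt (‖f‖ / ‖b.repr f i‖) hlt
      have hs' : ‖f‖ / ‖b.repr f i‖ < (μ i / ω) ^ (s + 1) :=
        lt_of_lt_of_le hs (pow_le_pow_right₀ hlt.le (Nat.le_succ s))
      have hμi : 0 < μ i := lt_trans hω hi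
      -- from hs' : ω^(s+1) * ‖f‖ < μ i^(s+1) * ‖c‖
      have hlt2 : ω ^ (s + 1) * ‖f‖ < μ i ^ (s + 1) * ‖b.repr f i‖ := by
        rw [div_pow] at hs'
        rw [div_lt_div_iff₀ hnc (by positivity)] at hs'
        nlinarith [hs']
      -- but μ i^(s+1) * ‖c‖ ≤ ‖T^(s+1) f‖ ≤ ω^(s+1) * ‖f‖
      have h1 : (μ i ^ (s + 1) * ‖b.repr f i‖) ^ 2 ≤ ‖(T ^ (s + 1)) f‖ ^ 2 := by
        rw [hnormsq]
        have : (μ i ^ (s + 1) * ‖b.repr f i‖) ^ 2 = ‖b.repr ((T ^ (s + 1)) f) i‖ ^ 2 := by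
          rw [hterm]
        rw [this]
        exact Finset.single_le_sum (f := fun j => ‖b.repr ((T ^ (s + 1)) f) j‖ ^ 2)
          (fun j _ => by positivity) (Finset.mem_univ i)
      have h2 : μ i ^ (s + 1) * ‖b.repr f i‖ ≤ ‖(T ^ (s + 1)) f‖ := by
        have := Real.sqrt_le_sqrt h1
        rwa [Real.sqrt_sq (by positivity), Real.sqrt_sq (norm_nonneg _)] at this
      have h3 := hbd (s + 1) (Nat.succ_pos s)
      linarith
    have hf : f = ∑ i, b.repr f i • b i := (b.sum_repr f).symm
    rw [hf]
    apply Submodule.sum_mem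
    intro i _
    rcases le_or_gt (μ i) ω with h | h
    · exact Submodule.smul_mem _ _ (Submodule.subset_span ⟨hbne i, μ i, h, hTb i⟩)
    · rw [hcoeff i h, zero_smul]
      exact Submodule.zero_mem _
end
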